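/- arXiv:math/0612504 — 6 statements merged into one kernel-verified Lean document; each statement's English description precedes it below -/
import Mathlib

section
/- Let $k \ge 3$ and $l > k$ be integers, and define $F_{SO}(z) = 2(5k^2-7k+2)z^4 - 2(6k^2+3kl-10k-2l+4)z^3 + (4k^2+7kl-5k-6l+2)z^2 - 2l(2k+l-2)z + l(k+l)$. Then the equation $F_{SO}(z) = 0$ has at least two distinct positive real solutions. -/
theorem stmt_5 (k l : ℕ) (hk : 3 ≤ k) (hl : k < l)
    (F : ℝ → ℝ)
    (hF : ∀ z : ℝ, F z =
      2 * (5 * (k : ℝ)^2 - 7 * k + 2) * z^4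
      - 2 * (6 * (k : ℝ)^2 + 3 * k * l - 10 * k - 2 * l + 4) * z^3
      + (4 * (k : ℝ)^2 + 7 * k * l - 5 * k - 6 * l + 2) * z^2
      - 2 * l * (2 * (k : ℝ) + l - 2) * z + l * ((k : ℝ) + l)) :
    ∃ z₁ z₂ : ℝ, 0 < z₁ ∧ 0 < z₂ ∧ z₁ ≠ z₂ ∧ F z₁ = 0 ∧ F z₂ = 0 := by
  have hk3 : (3 : ℝ) ≤ (k : ℝ) := by exact_mod_cast hk
  have hkl : (k : ℝ) + 1 ≤ (l : ℝ) := by exact_mod_cast hl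
  set a : ℝ := 2 * (5 * (k : ℝ)^2 - 7 * k + 2) with ha_def
  set b : ℝ := 2 * (6 * (k : ℝ)^2 + 3 * k * l - 10 * k - 2 * l + 4) with hb_def
  set c : ℝ := 4 * (k : ℝ)^2 + 7 * k * l - 5 * k - 6 * l + 2 with hc_def
  set d : ℝ := 2 * l * (2 * (k : ℝ) + l - 2) with hd_def
  set e : ℝ := (l : ℝ) * ((k : ℝ) + l) with he_def
  have ha : 0 < a := by nlinarith
  have hb : 0 < b := by nlinarith
  have hc : 0 < c := by nlinarith
  have hd : 0 < d := by nlinarith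
  have he : 0 < e := by nlinarith
  have hFeq : F = fun z : ℝ => a * z^4 - b * z^3 + c * z^2 - d * z + e := funext hF
  have hcont : ContinuousOn F (Set.Icc (0:ℝ) 1) := by
    rw [hFeq]; fun_prop
  have hF0 : 0 < F 0 := by rw [hF]; nlinarith
  have hF1 : F 1 < 0 := by rw [hF]; nlinarith
  have ha1 : 1 ≤ a := by nlinarith
  clear_value a b c d e
  clear ha_def hb_def hc_def hd_def he_def hF hk3 hkl
  obtain ⟨M, hM_def⟩ : ∃ M : ℝ, M = b + d + 1 := ⟨_, rfl⟩
  have hM1 : 1 ≤ M := by linarith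
  have hMpos : 0 < M := by linarith
  have hbd : b + d ≤ a * (b + d) := le_mul_of_one_le_left (by linarith) ha1
  have haM : a * M = a * (b + d) + a := by rw [hM_def]; ring
  have hkey : a ≤ a * M - b - d := by linarith
  have hpos1 : 0 < M^3 * (a * M - b - d) :=
    mul_pos (pow_pos hMpos 3) (lt_of_lt_of_le ha hkey)
  have hpos2 : 0 ≤ d * M * (M^2 - 1) := by
    apply mul_nonneg (mul_nonneg hd.le hMpos.le)
    have h2 : 1 ≤ M^2 := by nlinarith [hM1]
    linarith
  have hFM : 0 < F M := by
    have hid : F M = M^3 * (a * M - b - d) + c * M^2 + d * M * (M^2 - 1) + e := by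
      rw [hFeq]; ring
    linarith [hpos1, hpos2, mul_nonneg hc.le (sq_nonneg M), hid, he]
  -- root in (0,1)
  have h1 : (0:ℝ) ∈ Set.Ioo (F 1) (F 0) := ⟨hF1, hF0⟩
  obtain ⟨z₁, hz₁, hz₁0⟩ := intermediate_value_Ioo' (by norm_num : (0:ℝ) ≤ 1) hcont h1
  -- root in (1, M)
  have hcont2 : ContinuousOn F (Set.Icc (1:ℝ) M) := by rw [hFeq]; fun_prop
  have h2 : (0:ℝ) ∈ Set.Ioo (F 1) (F M) := ⟨hF1, hFM⟩
  obtain ⟨z₂, hz₂, hz₂0⟩ := intermediate_value_Ioo hM1 hcont2 h2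
  exact ⟨z₁, z₂, hz₁.1, lt_trans one_pos hz₂.1, ne_of_lt (lt_trans hz₁.2 hz₂.1),
    hz₁0, hz₂0⟩
end

section
/- Let $k \ge 1$ and $l \ge k$ be integers, and define $F_{Sp}(z) = 2(10k^2+7k+1)z^4 - 4(6k^2+3kl+5k+l+1)z^3 + (8k^2+14kl+5k+6l+1)z^2 - 4l(2k+l+1)z + 2l(k+l)$. Then the equation $F_{Sp}(z) = 0$ has at least two distinct positive real solutions. -/
theorem stmt_7 (k l : ℕ) (hk : 1 ≤ k) (hl : k ≤ l)
    (F : ℝ → ℝ)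
    (hF : ∀ z : ℝ, F z =
      2 * (10 * (k : ℝ)^2 + 7 * k + 1) * z^4
      - 4 * (6 * (k : ℝ)^2 + 3 * k * l + 5 * k + l + 1) * z^3
      + (8 * (k : ℝ)^2 + 14 * k * l + 5 * k + 6 * l + 1) * z^2
      - 4 * l * (2 * (k : ℝ) + l + 1) * z + 2 * l * ((k : ℝ) + l)) :
    ∃ z₁ z₂ : ℝ, 0 < z₁ ∧ 0 < z₂ ∧ z₁ ≠ z₂ ∧ F z₁ = 0 ∧ F z₂ = 0 := by
  have hk' : (1 : ℝ) ≤ (k : ℝ) := by exact_mod_cast hk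
  have hl' : (k : ℝ) ≤ (l : ℝ) := by exact_mod_cast hl
  have hFc : Continuous F := by
    have : F = fun z : ℝ =>
      2 * (10 * (k : ℝ)^2 + 7 * k + 1) * z^4
      - 4 * (6 * (k : ℝ)^2 + 3 * k * l + 5 * k + l + 1) * z^3
      + (8 * (k : ℝ)^2 + 14 * k * l + 5 * k + 6 * l + 1) * z^2
      - 4 * l * (2 * (k : ℝ) + l + 1) * z + 2 * l * ((k : ℝ) + l) := funext hF
    rw [this]; continuity
  have h0 : 0 < F 0 := by rw [hF]; nlinarith
  have h1 : F 1 < 0 := by rw [hF]; nlinarith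
  set M : ℝ := (k : ℝ) + l + 2 with hM
  have hM1 : (1 : ℝ) < M := by simp [hM]; nlinarith
  have hFM : 0 < F M := by
    obtain ⟨s, rfl⟩ : ∃ s, k = s + 1 := ⟨k - 1, by omega⟩
    obtain ⟨t, rfl⟩ : ∃ t, l = (s + 1) + t := ⟨l - (s + 1), by omega⟩
    rw [hF, hM]
    have key : 2 * (10 * ((s:ℝ)+1)^2 + 7 * ((s:ℝ)+1) + 1) * (((s:ℝ)+1) + ((s:ℝ)+1+(t:ℝ)) + 2)^4
      - 4 * (6 * ((s:ℝ)+1)^2 + 3 * ((s:ℝ)+1) * ((s:ℝ)+1+(t:ℝ)) + 5 * ((s:ℝ)+1) + ((s:ℝ)+1+(t:ℝ)) + 1) * (((s:ℝ)+1) + ((s:ℝ)+1+(t:ℝ)) + 2)^3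
      + (8 * ((s:ℝ)+1)^2 + 14 * ((s:ℝ)+1) * ((s:ℝ)+1+(t:ℝ)) + 5 * ((s:ℝ)+1) + 6 * ((s:ℝ)+1+(t:ℝ)) + 1) * (((s:ℝ)+1) + ((s:ℝ)+1+(t:ℝ)) + 2)^2
      - 4 * ((s:ℝ)+1+(t:ℝ)) * (2 * ((s:ℝ)+1) + ((s:ℝ)+1+(t:ℝ)) + 1) * (((s:ℝ)+1) + ((s:ℝ)+1+(t:ℝ)) + 2)
      + 2 * ((s:ℝ)+1+(t:ℝ)) * (((s:ℝ)+1) + ((s:ℝ)+1+(t:ℝ))) = 5604 + 5622 * (t:ℝ)^1 + 2080 * (t:ℝ)^2 + 336 * (t:ℝ)^3 + 20 * (t:ℝ)^4 + 21256 * (s:ℝ)^1 + 18658 * (s:ℝ)^1 * (t:ℝ)^1 + 5983 * (s:ℝ)^1 * (t:ℝ)^2 + 830 * (s:ℝ)^1 * (t:ℝ)^3 + 42 * (s:ℝ)^1 * (t:ℝ)^4 + 33268 * (s:ℝ)^2 + 24400 * (s:ℝ)^2 * (t:ℝ)^1 + 6270 * (s:ℝ)^2 * (t:ℝ)^2 +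 644 * (s:ℝ)^2 * (t:ℝ)^3 + 20 * (s:ℝ)^2 * (t:ℝ)^4 + 27556 * (s:ℝ)^3 + 15760 * (s:ℝ)^3 * (t:ℝ)^1 + 2856 * (s:ℝ)^3 * (t:ℝ)^2 + 160 * (s:ℝ)^3 * (t:ℝ)^3 + 12760 * (s:ℝ)^4 + 5040 * (s:ℝ)^4 * (t:ℝ)^1 + 480 * (s:ℝ)^4 * (t:ℝ)^2 + 3136 * (s:ℝ)^5 + 640 * (s:ℝ)^5 * (t:ℝ)^1 + 320 * (s:ℝ)^6 := by ring
    push_cast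
    rw [key]
    positivity
  have hiv1 : (0 : ℝ) ∈ F '' Set.Ioo 0 1 := by
    apply intermediate_value_Ioo' (le_of_lt one_pos) hFc.continuousOn
    exact ⟨h1, h0⟩
  have hiv2 : (0 : ℝ) ∈ F '' Set.Ioo 1 M := by
    apply intermediate_value_Ioo (le_of_lt hM1) hFc.continuousOn
    exact ⟨h1, hFM⟩
  obtain ⟨z₁, hz₁, hz₁0⟩ := hiv1
  obtain ⟨z₂, hz₂, hz₂0⟩ := hiv2
  exact ⟨z₁, z₂, hz₁.1, lt_trans one_pos hz₂.1, ne_of_lt (lt_trans hz₁.2 hz₂.1), hz₁0, hz₂0⟩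
end

section
/- Let $F(x,y,z) = \frac{a}{x} + \frac{b}{y} + \frac{c}{z} - d\frac{x}{y^2} - e\frac{x}{z^2} - f\frac{y}{z^2}$ and $G(x,y,z) = x^p y^q z^r$, with all constants $a,b,c,d,e,f,p,q,r$ positive. Suppose $(x,y,z)$ with $x,y,z > 0$ is a critical point of $F$ restricted to a level set of $G$ (i.e., $\nabla F$ is parallel to $\nabla G$ at $(x,y,z)$), and suppose $x = y$. Then $r(a+d)z^2 - pcxz + e(2p+2q+r)x^2 = 0$. -/
/-!
Since `x ∂G/∂x = p G` and `z ∂G/∂z = r G`, eliminating the Lagrange multiplier from the `x`- and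
`z`-components of `∇F = λ ∇G` gives `r x ∂F/∂x = p z ∂F/∂z`. Putting `y = x` and `p f = q e`
into this relation and clearing the denominator `x z²` leaves the stated quadratic.
-/

section PartialDerivatives

variable {𝕜 E : Type*} [NontriviallyNormedField 𝕜] [NormedAddCommGroup E] [NormedSpace 𝕜 E]
  {f : 𝕜 × 𝕜 × 𝕜 → E} {x y z : 𝕜}

theorem DifferentiableAt.fderiv_apply_one_zero_zero (hf : DifferentiableAt 𝕜 f (x, y, z)) :
    fderiv 𝕜 f (x, y, z) (1, 0, 0) = deriv (fun t => f (t, y, z)) x :=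
  (hf.hasFDerivAt.comp_hasDerivAt x
    ((hasDerivAt_id x).prodMk ((hasDerivAt_const x y).prodMk (hasDerivAt_const x z)))).deriv.symm

theorem DifferentiableAt.fderiv_apply_zero_zero_one (hf : DifferentiableAt 𝕜 f (x, y, z)) :
    fderiv 𝕜 f (x, y, z) (0, 0, 1) = deriv (fun t => f (x, y, t)) z :=
  (hf.hasFDerivAt.comp_hasDerivAt z
    ((hasDerivAt_const z x).prodMk ((hasDerivAt_const z y).prodMk (hasDerivAt_id z)))).deriv.symm

end PartialDerivatives

noncomputable def objective (a b c d e f : ℝ) (v : ℝ × ℝ × ℝ) : ℝ :=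
  a / v.1 + b / v.2.1 + c / v.2.2 - d * (v.1 / v.2.1 ^ 2) - e * (v.1 / v.2.2 ^ 2)
    - f * (v.2.1 / v.2.2 ^ 2)

noncomputable def rpowMonomial (p q r : ℝ) (v : ℝ × ℝ × ℝ) : ℝ :=
  v.1 ^ p * v.2.1 ^ q * v.2.2 ^ r

section

variable {a b c d e f p q r x y z : ℝ}

theorem differentiableAt_objective (hx : x ≠ 0) (hy : y ≠ 0) (hz : z ≠ 0) :
    DifferentiableAt ℝ (objective a b c d e f) (x, y, z) := by
  unfold objective
  fun_prop (disch := simpa)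

theorem differentiableAt_rpowMonomial (hx : x ≠ 0) (hy : y ≠ 0) (hz : z ≠ 0) :
    DifferentiableAt ℝ (rpowMonomial p q r) (x, y, z) := by
  unfold rpowMonomial
  fun_prop (disch := simpa)

theorem hasDerivAt_objective_fst (hx : x ≠ 0) :
    HasDerivAt (fun t => objective a b c d e f (t, y, z))
      (-a / x ^ 2 - d / y ^ 2 - e / z ^ 2) x := by
  have h := ((((hasDerivAt_inv hx).const_mul a).add_const (b / y + c / z)).sub
    (((hasDerivAt_id x).div_const (y ^ 2)).const_mul d)).sub
    (((hasDerivAt_id x).div_const (z ^ 2)).const_mul e) |>.sub_const (f * (y / z ^ 2))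
  refine (h.congr_deriv ?_).congr_of_eventuallyEq (.of_forall fun t => ?_)
  · field_simp
  · simp only [objective, id, Pi.sub_apply]; ring

theorem hasDerivAt_objective_snd_snd (hz : z ≠ 0) :
    HasDerivAt (fun t => objective a b c d e f (x, y, t))
      (-c / z ^ 2 + 2 * e * x / z ^ 3 + 2 * f * y / z ^ 3) z := by
  have h2 := (hasDerivAt_pow 2 z).inv (pow_ne_zero 2 hz)
  have h := ((((hasDerivAt_inv hz).const_mul c).const_add (a / x + b / y - d * (x / y ^ 2))).sub
    (h2.const_mul (e * x))).sub (h2.const_mul (f * y))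
  refine (h.congr_deriv ?_).congr_of_eventuallyEq (.of_forall fun t => ?_)
  · field_simp; ring
  · simp only [objective, Pi.sub_apply, Pi.inv_apply]; ring

theorem hasDerivAt_rpowMonomial_fst (hx : x ≠ 0) :
    HasDerivAt (fun t => rpowMonomial p q r (t, y, z))
      (p / x * rpowMonomial p q r (x, y, z)) x := by
  refine ((((hasDerivAt_id x).rpow_const (Or.inl hx)).mul_const (y ^ q)).mul_const
    (z ^ r)).congr_deriv ?_
  simp only [rpowMonomial, id, Real.rpow_sub_one hx]
  field_simp

theorem hasDerivAt_rpowMonomial_snd_snd (hz : z ≠ 0) :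
    HasDerivAt (fun t => rpowMonomial p q r (x, y, t))
      (r / z * rpowMonomial p q r (x, y, z)) z := by
  refine (((hasDerivAt_id z).rpow_const (Or.inl hz)).const_mul (x ^ p * y ^ q)).congr_deriv ?_
  simp only [rpowMonomial, id, Real.rpow_sub_one hz]
  field_simp

end

theorem objective_rpowMonomial_lagrange {a b c d e f p q r x y z : ℝ}
    (hx : x ≠ 0) (hy : y ≠ 0) (hz : z ≠ 0)
    (hcrit : ∃ lam : ℝ, fderiv ℝ (objective a b c d e f) (x, y, z) =
      lam • fderiv ℝ (rpowMonomial p q r) (x, y, z)) :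
    r * (-a / x - d * x / y ^ 2 - e * x / z ^ 2) =
      p * (-c / z + 2 * e * x / z ^ 2 + 2 * f * y / z ^ 2) := by
  obtain ⟨lam, hlam⟩ := hcrit
  have hF : DifferentiableAt ℝ (objective a b c d e f) (x, y, z) :=
    differentiableAt_objective hx hy hz
  have hG : DifferentiableAt ℝ (rpowMonomial p q r) (x, y, z) :=
    differentiableAt_rpowMonomial hx hy hz
  have h₁ := congrArg (· (1, 0, 0)) hlam
  have h₃ := congrArg (· (0, 0, 1)) hlam
  simp only [smul_apply, smul_eq_mul, hF.fderiv_apply_one_zero_zero,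
    hG.fderiv_apply_one_zero_zero, hF.fderiv_apply_zero_zero_one, hG.fderiv_apply_zero_zero_one,
    (hasDerivAt_objective_fst hx).deriv, (hasDerivAt_objective_snd_snd hz).deriv,
    (hasDerivAt_rpowMonomial_fst hx).deriv, (hasDerivAt_rpowMonomial_snd_snd hz).deriv] at h₁ h₃
  set G := rpowMonomial p q r (x, y, z)
  calc r * (-a / x - d * x / y ^ 2 - e * x / z ^ 2)
      = r * x * (-a / x ^ 2 - d / y ^ 2 - e / z ^ 2) := by field_simp
    _ = r * x * (lam * (p / x * G)) := by rw [h₁]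
    _ = p * z * (lam * (r / z * G)) := by field_simp
    _ = p * z * (-c / z ^ 2 + 2 * e * x / z ^ 3 + 2 * f * y / z ^ 3) := by rw [h₃]
    _ = p * (-c / z + 2 * e * x / z ^ 2 + 2 * f * y / z ^ 2) := by field_simp

theorem stmt_11_general (a b c d e f p q r : ℝ)
    (hp : 0 < p)
    (hfval : f = q * e / p)
    (F G : ℝ × ℝ × ℝ → ℝ)
    (hF : ∀ v : ℝ × ℝ × ℝ, F v =
      a / v.1 + b / v.2.1 + c / v.2.2 - d * (v.1 / v.2.1^2)
        - e * (v.1 / v.2.2^2) - f * (v.2.1 / v.2.2^2))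
    (hG : ∀ v : ℝ × ℝ × ℝ, G v = v.1 ^ p * v.2.1 ^ q * v.2.2 ^ r)
    (x y z : ℝ) (hx : 0 < x) (hz : 0 < z)
    (hcrit : ∃ lam : ℝ, fderiv ℝ F (x, y, z) = lam • fderiv ℝ G (x, y, z))
    (hxy : x = y) :
    r * (a + d) * z^2 - p * c * x * z + e * (2 * p + 2 * q + r) * x^2 = 0 := by
  obtain rfl : F = objective a b c d e f := funext hF
  obtain rfl : G = rpowMonomial p q r := funext hG
  subst hxy
  have key := objective_rpowMonomial_lagrange hx.ne' hx.ne' hz.ne' hcrit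
  subst hfval
  field_simp at key
  linear_combination -key

theorem stmt_11 (a b c d e f p q r : ℝ)
    (ha : 0 < a) (hb : 0 < b) (hc : 0 < c) (hd : 0 < d) (he : 0 < e)
    (hf : 0 < f) (hp : 0 < p) (hq : 0 < q) (hr : 0 < r)
    (hdval : d = (p * b - q * a) / (q + 2 * p)) (hfval : f = q * e / p)
    (F G : ℝ × ℝ × ℝ → ℝ)
    (hF : ∀ v : ℝ × ℝ × ℝ, F v =
      a / v.1 + b / v.2.1 + c / v.2.2 - d * (v.1 / v.2.1^2)
        - e * (v.1 / v.2.2^2) - f * (v.2.1 / v.2.2^2))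
    (hG : ∀ v : ℝ × ℝ × ℝ, G v = v.1 ^ p * v.2.1 ^ q * v.2.2 ^ r)
    (x y z : ℝ) (hx : 0 < x) (hy : 0 < y) (hz : 0 < z)
    (hcrit : ∃ lam : ℝ, fderiv ℝ F (x, y, z) = lam • fderiv ℝ G (x, y, z))
    (hxy : x = y) :
    r * (a + d) * z^2 - p * c * x * z + e * (2 * p + 2 * q + r) * x^2 = 0 :=
  stmt_11_general a b c d e f p q r hp hfval F G hF hG x y z hx hz hcrit hxy
end

section
/- Let $a,b,c,d,e,f,p,q,r$ be positive real numbers with $d = \frac{pb-qa}{q+2p}$ and $f = \frac{qe}{p}$. Suppose $x,y,z > 0$ satisfy the system $q(-\frac{a}{x}-d\frac{x}{y^2}-e\frac{x}{z^2}) = p(-\frac{b}{y}+2d\frac{x}{y^2}-f\frac{y}{z^2})$ and $r(-\frac{a}{x}-d\frac{x}{y^2}-e\frac{x}{z^2}) = p(-\frac{c}{z}+2e\frac{x}{z^2}+2f\frac{y}{z^2})$, with $x \ne y$. Then $x = \frac{aqyz^2}{pfy^2 + d(q+2p)z^2}$, and if moreover $d(q+2p) > aq$, then $y > x$. -/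
/-!
Clearing denominators in the first Lagrange equation and eliminating `b` and `f` through
`p b = d (q + 2p) + q a` and `p f = q e` makes it factor as
`(x - y) (a q y z² - (p f y² + d (q + 2p) z²) x) = 0`. Since `x ≠ y`, the second factor vanishes,
which is the formula for `x`. Then `d (q + 2p) z² x < a q y z² < d (q + 2p) z² y` once
`d (q + 2p) > a q`, so `x < y`.
-/

theorem first_lagrange_eq_factor {K : Type*} [Field K] {a b d e f p q x y z : K}
    (hx : x ≠ 0) (hy : y ≠ 0) (hz : z ≠ 0)
    (hb : p * b = d * (q + 2 * p) + q * a) (hf : p * f = q * e)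
    (h1 : q * (-(a / x) - d * (x / y^2) - e * (x / z^2)) =
          p * (-(b / y) + 2 * d * (x / y^2) - f * (y / z^2))) :
    (x - y) * (a * q * y * z^2 - (p * f * y^2 + d * (q + 2 * p) * z^2) * x) = 0 := by
  field_simp at h1
  linear_combination h1 - x * y * z^2 * hb - x^2 * y^2 * hf

theorem mul_denom_eq_of_first_lagrange_eq {K : Type*} [Field K] {a b d e f p q x y z : K}
    (hx : x ≠ 0) (hy : y ≠ 0) (hz : z ≠ 0)
    (hb : p * b = d * (q + 2 * p) + q * a) (hf : p * f = q * e)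
    (h1 : q * (-(a / x) - d * (x / y^2) - e * (x / z^2)) =
          p * (-(b / y) + 2 * d * (x / y^2) - f * (y / z^2)))
    (hxy : x ≠ y) :
    (p * f * y^2 + d * (q + 2 * p) * z^2) * x = a * q * y * z^2 := by
  have h := first_lagrange_eq_factor hx hy hz hb hf h1
  rw [mul_eq_zero, sub_eq_zero, sub_eq_zero] at h
  exact (h.resolve_left hxy).symm

theorem lt_of_add_mul_eq_mul {K : Type*} [CommRing K] [LinearOrder K] [IsStrictOrderedRing K]
    {P D A x y : K} (hP : 0 < P) (hD : 0 < D) (hA : A < D)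
    (hx : 0 < x) (hy : 0 < y) (h : (P + D) * x = A * y) : x < y := by
  have : D * x < D * y :=
    calc D * x < (P + D) * x := by gcongr; linarith
      _ = A * y := h
      _ < D * y := by gcongr
  exact lt_of_mul_lt_mul_left this hD.le

theorem stmt_12_general (a b d e f p q : ℝ)
    (hd : 0 < d) (hf : 0 < f) (hp : 0 < p) (hq : 0 < q)
    (hdval : d = (p * b - q * a) / (q + 2 * p)) (hfval : f = q * e / p)
    (x y z : ℝ) (hx : 0 < x) (hy : 0 < y) (hz : 0 < z)
    (h1 : q * (-(a / x) - d * (x / y^2) - e * (x / z^2)) =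
          p * (-(b / y) + 2 * d * (x / y^2) - f * (y / z^2)))
    (hxy : x ≠ y) :
    x = a * q * y * z^2 / (p * f * y^2 + d * (q + 2 * p) * z^2) ∧
      (d * (q + 2 * p) > a * q → y > x) := by
  have hpb : p * b = d * (q + 2 * p) + q * a := by
    rw [hdval]; field_simp; ring
  have hpf : p * f = q * e := by
    rw [hfval]; field_simp
  have hkey := mul_denom_eq_of_first_lagrange_eq hx.ne' hy.ne' hz.ne' hpb hpf h1 hxy
  refine ⟨eq_div_of_mul_eq (by positivity) (by rw [mul_comm, hkey]), fun hdq => ?_⟩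
  refine lt_of_add_mul_eq_mul (P := p * f * y^2) (D := d * (q + 2 * p) * z^2)
    (A := a * q * z^2) (by positivity) (by positivity) (by gcongr) hx hy ?_
  rw [hkey]; ring

theorem stmt_12 (a b c d e f p q r : ℝ)
    (ha : 0 < a) (hb : 0 < b) (hc : 0 < c) (hd : 0 < d) (he : 0 < e)
    (hf : 0 < f) (hp : 0 < p) (hq : 0 < q) (hr : 0 < r)
    (hdval : d = (p * b - q * a) / (q + 2 * p)) (hfval : f = q * e / p)
    (x y z : ℝ) (hx : 0 < x) (hy : 0 < y) (hz : 0 < z)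
    (h1 : q * (-(a / x) - d * (x / y^2) - e * (x / z^2)) =
          p * (-(b / y) + 2 * d * (x / y^2) - f * (y / z^2)))
    (h2 : r * (-(a / x) - d * (x / y^2) - e * (x / z^2)) =
          p * (-(c / z) + 2 * e * (x / z^2) + 2 * f * (y / z^2)))
    (hxy : x ≠ y) :
    x = a * q * y * z^2 / (p * f * y^2 + d * (q + 2 * p) * z^2) ∧
      (d * (q + 2 * p) > a * q → y > x) :=
  stmt_12_general a b d e f p q hd hf hp hq hdval hfval x y z hx hy hz h1 hxy
end

section
/- Let $a,b,c,d,e,f,p,q,r$ be positive real numbers with $d = \frac{pb-qa}{q+2p}$ and $f = \frac{qe}{p}$. Suppose $x,y,z > 0$ satisfy $q(-\frac{a}{x}-d\frac{x}{y^2}-e\frac{x}{z^2}) = p(-\frac{b}{y}+2d\frac{x}{y^2}-f\frac{y}{z^2})$ and $r(-\frac{a}{x}-d\frac{x}{y^2}-e\frac{x}{z^2}) = p(-\frac{c}{z}+2e\frac{x}{z^2}+2f\frac{y}{z^2})$, with $x \ne y$. Then $z/y$ is a root of the quartic $(2d(q+2p)+bq)dr\,u^4 - (q+2p)cdq\,u^3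 + (2d(r+q)(q+2p)+(r+2p)aq)f\,u^2 - cfpq\,u + (r+2q)f^2p$. -/
/-!
Both equations are homogeneous of degree `-1` in `(x, y, z)`. Once `d (q + 2p) = pb - qa` and
`pf = qe` are used, the first equation, cleared of denominators, factors as
`(x - y) (x S - q a y z²) = 0` with `S = p f y² + d (q + 2p) z²`; so off the diagonal `x = y`
it determines `x = q a y z² / S`. Cleared of denominators, the second equation is quadratic in
`x`; multiplying it by `S²` and substituting `x S = q a y z²` leaves `-p a y² z²` times the
quartic, homogenised in `(y, z)`.
-/

variable {K : Type*} [Field K] {a b c d e f p q r x y z : K}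

def einsteinQuartic (a b c d f p q r u : K) : K :=
  (2 * d * (q + 2 * p) + b * q) * d * r * u ^ 4
    - (q + 2 * p) * c * d * q * u ^ 3
    + (2 * d * (r + q) * (q + 2 * p) + (r + 2 * p) * a * q) * f * u ^ 2
    - c * f * p * q * u + (r + 2 * q) * f ^ 2 * p

lemma mul_eq_of_first_eq (hx : x ≠ 0) (hy : y ≠ 0) (hz : z ≠ 0) (hxy : x ≠ y)
    (hD : d * (q + 2 * p) = p * b - q * a) (hF : p * f = q * e)
    (h1 : q * (-(a / x) - d * (x / y ^ 2) - e * (x / z ^ 2)) =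
          p * (-(b / y) + 2 * d * (x / y ^ 2) - f * (y / z ^ 2))) :
    x * (p * f * y ^ 2 + d * (q + 2 * p) * z ^ 2) = q * a * y * z ^ 2 := by
  have h1' : q * (-a * y ^ 2 * z ^ 2 - d * x ^ 2 * z ^ 2 - e * x ^ 2 * y ^ 2)
      = p * (-b * x * y * z ^ 2 + 2 * d * x ^ 2 * z ^ 2 - f * x * y ^ 3) := by
    field_simp at h1
    linear_combination h1
  have hfactor :
      (x - y) * (x * (p * f * y ^ 2 + d * (q + 2 * p) * z ^ 2) - q * a * y * z ^ 2) = 0 := by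
    linear_combination -h1' + x ^ 2 * y ^ 2 * hF - x * y * z ^ 2 * hD
  exact sub_eq_zero.1 ((mul_eq_zero.1 hfactor).resolve_left (sub_ne_zero.2 hxy))

lemma einsteinQuartic_eq_zero (ha : a ≠ 0) (hp : p ≠ 0) (hx : x ≠ 0) (hy : y ≠ 0) (hz : z ≠ 0)
    (hD : d * (q + 2 * p) = p * b - q * a) (hF : p * f = q * e)
    (hX : x * (p * f * y ^ 2 + d * (q + 2 * p) * z ^ 2) = q * a * y * z ^ 2)
    (h2 : r * (-(a / x) - d * (x / y ^ 2) - e * (x / z ^ 2)) =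
          p * (-(c / z) + 2 * e * (x / z ^ 2) + 2 * f * (y / z ^ 2))) :
    einsteinQuartic a b c d f p q r (z / y) = 0 := by
  have h2' : r * (-a * y ^ 2 * z ^ 2 - d * x ^ 2 * z ^ 2 - e * x ^ 2 * y ^ 2)
      = p * (-c * x * y ^ 2 * z + 2 * e * x ^ 2 * y ^ 2 + 2 * f * x * y ^ 3) := by
    field_simp at h2
    linear_combination h2
  set S := p * f * y ^ 2 + d * (q + 2 * p) * z ^ 2
  have hhom : y ^ 4 * einsteinQuartic a b c d f p q r (z / y) =
      (2 * d * (q + 2 * p) + b * q) * d * r * z ^ 4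
        - (q + 2 * p) * c * d * q * z ^ 3 * y
        + (2 * d * (r + q) * (q + 2 * p) + (r + 2 * p) * a * q) * f * z ^ 2 * y ^ 2
        - c * f * p * q * z * y ^ 3 + (r + 2 * q) * f ^ 2 * p * y ^ 4 := by
    unfold einsteinQuartic
    field_simp
  -- `h2'` reads `-A x² + B x - r a y² z² = 0` with `A = r d z² + (r + 2p) e y²` and
  -- `B = y² (p c z - 2 p f y)`; writing `X = q a y z²`, the coefficient of `hX` comes from
  -- `S² (A x² - B x) - (A X² - B S X) = (x S - X) (A (x S + X) - B S)`.
  have key : p * a * y ^ 2 * z ^ 2 * (y ^ 4 * einsteinQuartic a b c d f p q r (z / y)) = 0 := by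
    rw [hhom]
    linear_combination -S ^ 2 * h2' - r * d * q * a * y ^ 2 * z ^ 6 * hD
      + (r + 2 * p) * q * a ^ 2 * y ^ 4 * z ^ 4 * hF
      + (-(r * d * z ^ 2 + (r + 2 * p) * e * y ^ 2) * (x * S + q * a * y * z ^ 2)
          + y ^ 2 * (p * c * z - 2 * p * f * y) * S) * hX
  simpa [hp, ha, hy, hz] using key

theorem stmt_13_general (a b c d e f p q r : ℝ)
    (ha : 0 < a) (hp : 0 < p) (hq : 0 < q)
    (hdval : d = (p * b - q * a) / (q + 2 * p)) (hfval : f = q * e / p)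
    (x y z : ℝ) (hx : 0 < x) (hy : 0 < y) (hz : 0 < z)
    (h1 : q * (-(a / x) - d * (x / y^2) - e * (x / z^2)) =
          p * (-(b / y) + 2 * d * (x / y^2) - f * (y / z^2)))
    (h2 : r * (-(a / x) - d * (x / y^2) - e * (x / z^2)) =
          p * (-(c / z) + 2 * e * (x / z^2) + 2 * f * (y / z^2)))
    (hxy : x ≠ y) :
    (2 * d * (q + 2 * p) + b * q) * d * r * (z / y)^4
      - (q + 2 * p) * c * d * q * (z / y)^3
      + (2 * d * (r + q) * (q + 2 * p) + (r + 2 * p) * a * q) * f * (z / y)^2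
      - c * f * p * q * (z / y) + (r + 2 * q) * f^2 * p = 0 := by
  have hD : d * (q + 2 * p) = p * b - q * a := by
    rw [hdval]
    field_simp
  have hF : p * f = q * e := by
    rw [hfval]
    field_simp
  have hX := mul_eq_of_first_eq hx.ne' hy.ne' hz.ne' hxy hD hF h1
  exact einsteinQuartic_eq_zero ha.ne' hp.ne' hx.ne' hy.ne' hz.ne' hD hF hX h2

theorem stmt_13 (a b c d e f p q r : ℝ)
    (ha : 0 < a) (hb : 0 < b) (hc : 0 < c) (hd : 0 < d) (he : 0 < e)
    (hf : 0 < f) (hp : 0 < p) (hq : 0 < q) (hr : 0 < r)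
    (hdval : d = (p * b - q * a) / (q + 2 * p)) (hfval : f = q * e / p)
    (x y z : ℝ) (hx : 0 < x) (hy : 0 < y) (hz : 0 < z)
    (h1 : q * (-(a / x) - d * (x / y^2) - e * (x / z^2)) =
          p * (-(b / y) + 2 * d * (x / y^2) - f * (y / z^2)))
    (h2 : r * (-(a / x) - d * (x / y^2) - e * (x / z^2)) =
          p * (-(c / z) + 2 * e * (x / z^2) + 2 * f * (y / z^2)))
    (hxy : x ≠ y) :
    (2 * d * (q + 2 * p) + b * q) * d * r * (z / y)^4
      - (q + 2 * p) * c * d * q * (z / y)^3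
      + (2 * d * (r + q) * (q + 2 * p) + (r + 2 * p) * a * q) * f * (z / y)^2
      - c * f * p * q * (z / y) + (r + 2 * q) * f^2 * p = 0 :=
  stmt_13_general a b c d e f p q r ha hp hq hdval hfval x y z hx hy hz h1 h2 hxy
end

section
/- Let $\mathfrak{g}$ be a compact semisimple real Lie algebra, $\mathfrak{r} \subseteq \mathfrak{g}$ a subalgebra, and $\mathfrak{q} \subseteq \mathfrak{r}$ a simple subalgebra such that $B_{\mathfrak{q}} = \alpha \cdot B_{\mathfrak{r}}|_{\mathfrak{q}}$ for some real $\alpha$, where $B$ denotes Killing forms. Let $\{f_j\}_{j=1}^{\dim \mathfrak{q}}$ be a basis of $\mathfrak{q}$ orthonormal with respect to $-B_{\mathfrak{r}}$. Then for each $i$, $\sum_{j,k=1}^{\dim\mathfrak{q}} \big(-B_{\mathfrak{r}}([f_i,f_j],f_k)\big)^2 = \alpha$, and consequently $\sum_{i,j,k=1}^{\dim\mathfrak{q}} \big(-B_{\mathfrak{r}}([f_i,f_j],f_k)\big)^2 = \alpha \cdot \dim \mathfrak{q}$. -/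
/-! In a `-B_𝔯`-orthonormal basis, `∑ₖ (-B_𝔯([f_i, f_j], f_k))²` is `-B_𝔯([f_i, f_j], [f_i, f_j])`
(Parseval). By ad-invariance of `B_𝔯` this equals `B_𝔯([f_i, [f_i, f_j]], f_j)`, and summing over `j`
gives minus the trace of `(ad f_i)²` on `𝔮`, i.e. `-B_𝔮(f_i, f_i) = α`. -/

open LinearMap (BilinForm)

namespace Module.Basis

variable {R M ι : Type*} [CommSemiring R] [AddCommMonoid M] [Module R M] [DecidableEq ι]
  (b : Basis ι R M) {φ : BilinForm R M}

theorem repr_apply_eq_bilinForm (hφ : ∀ i j, φ (b i) (b j) = if i = j then 1 else 0)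
    (v : M) (j : ι) : b.repr v j = φ v (b j) := by
  have hcoord : b.coord j = φ.flip (b j) :=
    b.ext fun i => by simp [hφ, Finsupp.single_apply]
  exact LinearMap.congr_fun hcoord v

variable [Fintype ι]

theorem sum_sq_bilinForm_eq (hφ : ∀ i j, φ (b i) (b j) = if i = j then 1 else 0) (v : M) :
    ∑ k, φ v (b k) ^ 2 = φ v v := by
  calc ∑ k, φ v (b k) ^ 2 = φ v (∑ k, b.repr v k • b k) := by
        simp [b.repr_apply_eq_bilinForm hφ, sq]
    _ = φ v v := by rw [b.sum_repr]

theorem trace_eq_sum_bilinForm (hφ : ∀ i j, φ (b i) (b j) = if i = j then 1 else 0)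
    (T : M →ₗ[R] M) : LinearMap.trace R M T = ∑ j, φ (T (b j)) (b j) := by
  simp [LinearMap.trace_eq_matrix_trace R b, Matrix.trace, LinearMap.toMatrix_apply,
    b.repr_apply_eq_bilinForm hφ]

end Module.Basis

theorem LieSubalgebra.sum_sq_killingForm_lie_eq {R L ι : Type*} [CommRing R] [LieRing L]
    [LieAlgebra R L] [DecidableEq ι] [Fintype ι] (q : LieSubalgebra R L) (b : Module.Basis ι R q)
    (hb : ∀ i j, -killingForm R L (b i) (b j) = if i = j then 1 else 0) (x : q) :
    ∑ j, ∑ k, (-killingForm R L ((⁅x, b j⁆ : q) : L) (b k)) ^ 2 = -killingForm R q x x := by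
  let φ : BilinForm R q := -(killingForm R L).compl₁₂ q.incl.toLinearMap q.incl.toLinearMap
  have hφ_apply : ∀ y z : q, φ y z = -killingForm R L y z := fun _ _ => rfl
  have hφ : ∀ i j, φ (b i) (b j) = if i = j then 1 else 0 := hb
  calc ∑ j, ∑ k, (-killingForm R L ((⁅x, b j⁆ : q) : L) (b k)) ^ 2
      = ∑ j, φ ⁅x, b j⁆ ⁅x, b j⁆ := by
        simp only [← hφ_apply, b.sum_sq_bilinForm_eq hφ]
    _ = -∑ j, φ ⁅x, ⁅x, b j⁆⁆ (b j) := by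
        simp only [← Finset.sum_neg_distrib, hφ_apply, LieSubalgebra.coe_bracket,
          LieModule.traceForm_apply_lie_apply', neg_neg]
    _ = -killingForm R q x x := by
        rw [killingForm_apply_apply, b.trace_eq_sum_bilinForm hφ]
        rfl

theorem stmt_14_general (g : Type*) [LieRing g] [LieAlgebra ℝ g]
    (r : LieSubalgebra ℝ g) (q : LieSubalgebra ℝ ↥r) (α : ℝ)
    (hα : ∀ X Y : ↥q, killingForm ℝ ↥q X Y = α * killingForm ℝ ↥r (X : ↥r) (Y : ↥r))
    (f : Fin (Module.finrank ℝ ↥q) → ↥q)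
    (hbasis : ∃ B : Module.Basis (Fin (Module.finrank ℝ ↥q)) ℝ ↥q, ⇑B = f)
    (horth : ∀ i j, -killingForm ℝ ↥r (f i : ↥r) (f j : ↥r) = if i = j then 1 else 0) :
    (∀ i, ∑ j, ∑ k, (-killingForm ℝ ↥r ((⁅f i, f j⁆ : ↥q) : ↥r) (f k : ↥r))^2 = α) ∧
    (∑ i, ∑ j, ∑ k, (-killingForm ℝ ↥r ((⁅f i, f j⁆ : ↥q) : ↥r) (f k : ↥r))^2
      = α * Module.finrank ℝ ↥q) := by
  obtain ⟨B, rfl⟩ := hbasis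
  have hrow : ∀ i, ∑ j, ∑ k, (-killingForm ℝ ↥r ((⁅B i, B j⁆ : ↥q) : ↥r) (B k : ↥r)) ^ 2 = α := by
    intro i
    have hunit := horth i i
    rw [if_pos rfl] at hunit
    rw [q.sum_sq_killingForm_lie_eq B horth, hα,
      show killingForm ℝ ↥r (B i) (B i) = -1 by linarith]
    ring
  refine ⟨hrow, ?_⟩
  rw [Finset.sum_congr rfl fun i _ => hrow i, Finset.sum_const, Finset.card_univ,
    Fintype.card_fin, nsmul_eq_mul, mul_comm]

theorem stmt_14 (g : Type*) [LieRing g] [LieAlgebra ℝ g] [Module.Finite ℝ g]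
    [LieAlgebra.IsSemisimple ℝ g]
    (hcompact : ∀ X : g, X ≠ 0 → killingForm ℝ g X X < 0)
    (r : LieSubalgebra ℝ g) (q : LieSubalgebra ℝ ↥r)
    (hq : LieAlgebra.IsSimple ℝ ↥q) (α : ℝ)
    (hα : ∀ X Y : ↥q, killingForm ℝ ↥q X Y = α * killingForm ℝ ↥r (X : ↥r) (Y : ↥r))
    (f : Fin (Module.finrank ℝ ↥q) → ↥q)
    (hbasis : ∃ B : Module.Basis (Fin (Module.finrank ℝ ↥q)) ℝ ↥q, ⇑B = f)
    (horth : ∀ i j, -killingForm ℝ ↥r (f i : ↥r) (f j : ↥r) = if i = j then 1 else 0) :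
    (∀ i, ∑ j, ∑ k, (-killingForm ℝ ↥r ((⁅f i, f j⁆ : ↥q) : ↥r) (f k : ↥r))^2 = α) ∧
    (∑ i, ∑ j, ∑ k, (-killingForm ℝ ↥r ((⁅f i, f j⁆ : ↥q) : ↥r) (f k : ↥r))^2
      = α * Module.finrank ℝ ↥q) :=
  stmt_14_general g r q α hα f hbasis horth
end
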